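/- Let A be an n-by-n complex matrix with p(A) finite. If p(A) + a(A) > n, then p(A) = a(A). -/

import Mathlib

open Matrix

noncomputable section

/-- An `ι`-by-`ι` complex matrix `A` is a *partial isometry* if `‖Ax‖ = ‖x‖` for every
vector `x` in the orthogonal complement of `ker A` (Euclidean structure). -/
def Matrix.IsPartialIsometry {ι : Type*} [Fintype ι] [DecidableEq ι]
    (A : Matrix ι ι ℂ) : Prop :=
  ∀ x ∈ (LinearMap.ker (Matrix.toEuclideanLin A))ᗮ, ‖Matrix.toEuclideanLin A x‖ = ‖x‖

/-- The *power partial isometry index* `p(A)`: the supremum (in `ℕ∞`, possibly `⊤`) of the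
nonnegative integers `j` such that `I, A, A², …, A^j` are all partial isometries. -/
def Matrix.pIndex {ι : Type*} [Fintype ι] [DecidableEq ι] (A : Matrix ι ι ℂ) : ℕ∞ :=
  sSup ((↑) '' {j : ℕ | ∀ i ≤ j, (A ^ i).IsPartialIsometry})

/-- The *ascent* `a(A)`: the smallest nonnegative integer `k` with `ker A^k = ker A^(k+1)`. -/
def Matrix.ascent {ι : Type*} [Fintype ι] [DecidableEq ι] (A : Matrix ι ι ℂ) : ℕ :=
  sInf {k : ℕ | LinearMap.ker (Matrix.toEuclideanLin (A ^ k)) =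
    LinearMap.ker (Matrix.toEuclideanLin (A ^ (k + 1)))}

/-- `A` is unitarily similar to `B` (allowing different, necessarily equipotent, index types):
`B = U* A U` for some unitary `U`. -/
def Matrix.UnitarilySimilarTo {ι κ : Type*} [Fintype ι] [Fintype κ] [DecidableEq ι]
    [DecidableEq κ] (A : Matrix ι ι ℂ) (B : Matrix κ κ ℂ) : Prop :=
  ∃ U : Matrix ι κ ℂ, Uᴴ * U = 1 ∧ U * Uᴴ = 1 ∧ B = Uᴴ * A * U

/-- The `q`-by-`q` nilpotent Jordan block `J_q`. -/
def JordanBlock (q : ℕ) : Matrix (Fin q) (Fin q) ℂ :=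
  Matrix.of fun a b => if (b : ℕ) = (a : ℕ) + 1 then 1 else 0

/-- `A` is of class `S_n`: a contraction whose eigenvalues all have moduli strictly
less than `1` and with `rank (1 - A*A) = 1`. -/
def Matrix.IsClassSn {n : ℕ} (A : Matrix (Fin n) (Fin n) ℂ) : Prop :=
  (∀ x : EuclideanSpace ℂ (Fin n), ‖Matrix.toEuclideanLin A x‖ ≤ ‖x‖) ∧
  (∀ z ∈ spectrum ℂ A, ‖z‖ < 1) ∧
  (1 - Aᴴ * A).rank = 1


/-!
Write `k = p(A)`, `a = a(A)` and `d j = dim ker A^(j+1) - dim ker A^j = dim (ker A ⊓ range A^j)`: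
a nonincreasing sequence, positive exactly for `j < a`.

If `a < k`, then `A`, `A^a`, `A^(a+1)` are partial isometries and `ker A^a = ker A^(a+1)`; this
puts `range A^a` inside `(ker A)ᗮ`, where `A` is isometric, so every power of `A` is a partial
isometry and `p(A) = ∞`.

If `k < a`, then `d (k-1) ≥ 2`: otherwise the layer `ker A^k ⊖ ker A^(k-1)` is the line spanned by
`A w` for any `w ≠ 0` in `ker A^(k+1) ⊖ ker A^k`, and this rigidity makes `A^(k+1)` a partial
isometry. Hence `d j ≥ 2` for `j < k`, and `n ≥ dim ker A^a = ∑_{j<a} d j ≥ a + k`.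
-/

open LinearMap Module Submodule

section KernelGrowth

variable {K V : Type*} [Field K] [AddCommGroup V] [Module K V]

theorem Module.End.ker_pow_le_ker_pow (T : Module.End K V) {i j : ℕ} (h : i ≤ j) :
    ker (T ^ i) ≤ ker (T ^ j) := by
  obtain ⟨d, rfl⟩ := exists_add_of_le h
  rw [add_comm, pow_add, Module.End.mul_eq_comp]
  exact ker_le_ker_comp _ _

theorem Module.End.range_pow_le_range_pow (T : Module.End K V) {i j : ℕ} (h : i ≤ j) :
    range (T ^ j) ≤ range (T ^ i) := by
  obtain ⟨d, rfl⟩ := exists_add_of_le h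
  rw [pow_add, Module.End.mul_eq_comp]
  exact range_comp_le_range _ _

variable [FiniteDimensional K V]

-- The second summand is visibly antitone in `j`.
theorem Module.End.finrank_ker_pow_succ (T : Module.End K V) (j : ℕ) :
    finrank K (ker (T ^ (j + 1))) =
      finrank K (ker (T ^ j)) + finrank K (ker T ⊓ range (T ^ j) : Submodule K V) := by
  set f := (T ^ j).domRestrict (ker (T ^ (j + 1)))
  have hrange : range f = ker T ⊓ range (T ^ j) := by
    rw [range_domRestrict]
    ext y
    constructor
    · rintro ⟨x, hx, rfl⟩
      refine ⟨?_, mem_range_self _ x⟩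
      rwa [SetLike.mem_coe, mem_ker, ← Module.End.mul_apply, ← pow_succ']
    · rintro ⟨hy, x, rfl⟩
      refine ⟨x, ?_, rfl⟩
      rwa [SetLike.mem_coe, mem_ker, pow_succ', Module.End.mul_apply]
  have hker : finrank K (ker f) = finrank K (ker (T ^ j)) := by
    rw [ker_domRestrict]
    exact (comapSubtypeEquivOfLe (T.ker_pow_le_ker_pow j.le_succ)).finrank_eq
  rw [← finrank_range_add_finrank_ker f, hrange, hker, add_comm]

theorem Module.End.add_le_finrank_ker_pow {T : Module.End K V} {a k : ℕ} (hka : k ≤ a)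
    (hgrow : ∀ j < a, ker (T ^ j) ≠ ker (T ^ (j + 1)))
    (htwo : ∀ j < k, 2 ≤ finrank K (ker T ⊓ range (T ^ j) : Submodule K V)) :
    a + k ≤ finrank K (ker (T ^ a)) := by
  have hpos : ∀ j < a, 1 ≤ finrank K (ker T ⊓ range (T ^ j) : Submodule K V) := by
    intro j hj
    by_contra! hzero
    refine hgrow j hj (eq_of_le_of_finrank_le (T.ker_pow_le_ker_pow j.le_succ) ?_)
    rw [T.finrank_ker_pow_succ j]
    omega
  suffices H : ∀ j ≤ a, j + min j k ≤ finrank K (ker (T ^ j)) by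
    have := H a le_rfl
    omega
  intro j
  induction j with
  | zero => simp
  | succ j ih =>
    intro hj
    have := ih (by omega)
    have := T.finrank_ker_pow_succ j
    have := hpos j (by omega)
    by_cases hjk : j < k
    · have := htwo j hjk
      omega
    · omega

end KernelGrowth

namespace LinearMap

variable {𝕜 E F G : Type*} [RCLike 𝕜] [NormedAddCommGroup E] [InnerProductSpace 𝕜 E]
  [NormedAddCommGroup F] [InnerProductSpace 𝕜 F] [NormedAddCommGroup G] [InnerProductSpace 𝕜 G]

def IsPartialIsometry (S : E →ₗ[𝕜] F) : Prop :=
  ∀ x ∈ (ker S)ᗮ, ‖S x‖ = ‖x‖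

namespace IsPartialIsometry

theorem mem_orthogonal_ker_iff [FiniteDimensional 𝕜 E] {R : E →ₗ[𝕜] F}
    (hR : R.IsPartialIsometry) {x : E} :
    x ∈ (ker R)ᗮ ↔ ‖R x‖ = ‖x‖ := by
  refine ⟨hR x, fun hx => ?_⟩
  obtain ⟨u, hu, v, hv, rfl⟩ := (ker R).exists_add_mem_mem_orthogonal x
  have hpyth := norm_add_sq_eq_norm_sq_add_norm_sq_of_inner_eq_zero u v
    (inner_right_of_mem_orthogonal hu hv)
  rw [map_add, mem_ker.mp hu, zero_add, hR v hv] at hx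
  have hu0 : u = 0 := by
    rw [← hx] at hpyth
    exact norm_eq_zero.mp (by nlinarith [norm_nonneg u])
  rwa [hu0, zero_add]

theorem inner_map_map {R : E →ₗ[𝕜] F} (hR : R.IsPartialIsometry) {x y : E}
    (hx : x ∈ (ker R)ᗮ) (hy : y ∈ (ker R)ᗮ) : inner 𝕜 (R x) (R y) = inner 𝕜 x y :=
  (⟨R ∘ₗ (ker R)ᗮ.subtype, fun z => hR z z.2⟩ : (ker R)ᗮ →ₗᵢ[𝕜] F).inner_map_map ⟨x, hx⟩ ⟨y, hy⟩

theorem comp_iff [FiniteDimensional 𝕜 F] {S : F →ₗ[𝕜] G} {R : E →ₗ[𝕜] F}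
    (hS : S.IsPartialIsometry) (hR : R.IsPartialIsometry) :
    (S ∘ₗ R).IsPartialIsometry ↔ ∀ x ∈ (ker (S ∘ₗ R))ᗮ, R x ∈ (ker S)ᗮ := by
  have hRx : ∀ x ∈ (ker (S ∘ₗ R))ᗮ, ‖R x‖ = ‖x‖ :=
    fun x hx => hR x (orthogonal_le (ker_le_ker_comp R S) hx)
  refine ⟨fun hSR x hx => ?_, fun h x hx => ?_⟩
  · rw [hS.mem_orthogonal_ker_iff, ← comp_apply, hSR x hx, hRx x hx]
  · rw [comp_apply, hS _ (h x hx), hRx x hx]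

end IsPartialIsometry

end LinearMap

namespace Module.End

variable {𝕜 E : Type*} [RCLike 𝕜]
  [NormedAddCommGroup E] [InnerProductSpace 𝕜 E] [FiniteDimensional 𝕜 E]
  {T : Module.End 𝕜 E} {m : ℕ}

theorem isPartialIsometry_pow_succ_iff (hT : T.IsPartialIsometry)
    (hm : (T ^ m).IsPartialIsometry) :
    (T ^ (m + 1)).IsPartialIsometry ↔ ∀ x ∈ (ker (T ^ (m + 1)))ᗮ, (T ^ m) x ∈ (ker T)ᗮ := by
  rw [pow_succ', Module.End.mul_eq_comp]
  exact hT.comp_iff hm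

-- Stable kernels put all of `range (T ^ m)` in `(ker T)ᗮ`, where `T` is isometric.
theorem isPartialIsometry_pow_add_of_ker_pow_eq (hT : T.IsPartialIsometry)
    (hm : (T ^ m).IsPartialIsometry) (hm1 : (T ^ (m + 1)).IsPartialIsometry)
    (hker : ker (T ^ m) = ker (T ^ (m + 1))) (d : ℕ) : (T ^ (m + d)).IsPartialIsometry := by
  have hrange : ∀ z, (T ^ m) z ∈ (ker T)ᗮ := by
    intro z
    obtain ⟨u, hu, v, hv, rfl⟩ := (ker (T ^ m)).exists_add_mem_mem_orthogonal z
    rw [map_add, mem_ker.mp hu, zero_add]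
    exact (isPartialIsometry_pow_succ_iff hT hm).1 hm1 v (hker ▸ hv)
  induction d with
  | zero => exact hm
  | succ d ih =>
    rw [← add_assoc]
    refine (isPartialIsometry_pow_succ_iff hT ih).2 fun x _ => ?_
    rw [pow_add, Module.End.mul_apply]
    exact hrange _

theorem isPartialIsometry_pow_add_two (hT : T.IsPartialIsometry)
    (hm : (T ^ m).IsPartialIsometry) (hm1 : (T ^ (m + 1)).IsPartialIsometry)
    (hgrow : ker (T ^ (m + 1)) ≠ ker (T ^ (m + 2)))
    (hdim : finrank 𝕜 (ker (T ^ (m + 1))) ≤ finrank 𝕜 (ker (T ^ m)) + 1) :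
    (T ^ (m + 2)).IsPartialIsometry := by
  have hker1 : ∀ {j}, 1 ≤ j → (ker (T ^ j))ᗮ ≤ (ker T)ᗮ := fun hj =>
    orthogonal_le (by simpa using T.ker_pow_le_ker_pow hj)
  set M : Submodule 𝕜 E := (ker (T ^ m))ᗮ ⊓ ker (T ^ (m + 1)) with hMdef
  -- `M` is spanned by `T w`, for any nonzero `w` in the next layer
  obtain ⟨w, hw, hw0⟩ : ∃ w ∈ (ker (T ^ (m + 1)))ᗮ ⊓ ker (T ^ (m + 2)), w ≠ 0 := by
    refine exists_mem_ne_zero_of_ne_bot fun hbot => hgrow ?_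
    simpa [hbot] using
      sup_orthogonal_inf_of_hasOrthogonalProjection (T.ker_pow_le_ker_pow (m + 1).le_succ)
  have hwT : w ∈ (ker T)ᗮ := hker1 (by omega) hw.1
  have hTwM : T w ∈ M := by
    refine ⟨(hm.comp_iff hT).1 (by rwa [← Module.End.mul_eq_comp, ← pow_succ]) w hw.1, ?_⟩
    rw [SetLike.mem_coe, mem_ker, ← Module.End.mul_apply, ← pow_succ]
    exact hw.2
  have hTw0 : T w ≠ 0 := by
    rw [← norm_ne_zero_iff, hT w hwT, norm_ne_zero_iff]
    exact hw0
  have hM : M = 𝕜 ∙ T w := by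
    refine (eq_of_le_of_finrank_le ((span_singleton_le_iff_mem _ _).2 hTwM) ?_).symm
    have := finrank_add_inf_finrank_orthogonal (T.ker_pow_le_ker_pow (Nat.le_add_right m 1))
    rw [← hMdef] at this
    rw [finrank_span_singleton hTw0]
    omega
  have hMperp : Mᗮ = ker (T ^ m) ⊔ (ker (T ^ (m + 1)))ᗮ := by
    rw [← orthogonal_orthogonal (ker (T ^ m) ⊔ _), ← inf_orthogonal, orthogonal_orthogonal]
  -- for `x ⊥ ker T ^ (m + 2)`, `T x ⊥ T w`, so `T x ∈ Mᗮ` and `T ^ m` kills its `ker T ^ m` part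
  refine (isPartialIsometry_pow_succ_iff hT hm1).2 fun x hx => ?_
  have hTx : T x ∈ Mᗮ := by
    rw [hM, mem_orthogonal_singleton_iff_inner_right, hT.inner_map_map hwT (hker1 (by omega) hx)]
    exact inner_right_of_mem_orthogonal hw.2 hx
  rw [hMperp] at hTx
  obtain ⟨p, hp, q, hq, hpq⟩ := mem_sup.1 hTx
  rw [pow_succ, Module.End.mul_apply, ← hpq, map_add, mem_ker.1 hp, zero_add]
  exact (isPartialIsometry_pow_succ_iff hT hm).1 hm1 q hq

theorem le_of_not_isPartialIsometry_pow_succ {k a : ℕ}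
    (hPI : ∀ i ≤ k, (T ^ i).IsPartialIsometry) (hnot : ¬ (T ^ (k + 1)).IsPartialIsometry)
    (hker : ker (T ^ a) = ker (T ^ (a + 1))) : k ≤ a := by
  by_contra! hak
  obtain ⟨d, rfl⟩ := exists_add_of_le hak.le
  have hT : T.IsPartialIsometry := by simpa using hPI 1 (by omega)
  refine hnot ?_
  rw [add_assoc]
  exact isPartialIsometry_pow_add_of_ker_pow_eq hT (hPI a (by omega)) (hPI (a + 1) hak) hker _

theorem two_le_finrank_ker_inf_range_pow {k : ℕ}
    (hPI : ∀ i ≤ k, (T ^ i).IsPartialIsometry) (hnot : ¬ (T ^ (k + 1)).IsPartialIsometry)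
    (hgrow : ker (T ^ k) ≠ ker (T ^ (k + 1))) {j : ℕ} (hj : j < k) :
    2 ≤ finrank 𝕜 (ker T ⊓ range (T ^ j) : Submodule 𝕜 E) := by
  obtain ⟨m, rfl⟩ : ∃ m, k = m + 1 := ⟨k - 1, by omega⟩
  have hm : 2 ≤ finrank 𝕜 (ker T ⊓ range (T ^ m) : Submodule 𝕜 E) := by
    by_contra! hlt
    refine hnot (isPartialIsometry_pow_add_two (by simpa using hPI 1 (by omega))
      (hPI m (by omega)) (hPI (m + 1) le_rfl) hgrow ?_)
    rw [T.finrank_ker_pow_succ m]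
    omega
  exact hm.trans (finrank_mono (inf_le_inf_left _ (T.range_pow_le_range_pow (by omega))))

end Module.End

namespace Matrix

variable {ι : Type*} [Fintype ι] [DecidableEq ι] (A : Matrix ι ι ℂ)

theorem isPartialIsometry_pow_iff (i : ℕ) :
    (A ^ i).IsPartialIsometry ↔ (toEuclideanLin A ^ i).IsPartialIsometry := by
  rw [Matrix.IsPartialIsometry, LinearMap.IsPartialIsometry, toLpLin_pow]

theorem exists_pIndex_eq (hfin : A.pIndex ≠ ⊤) :
    ∃ k : ℕ, A.pIndex = k ∧ (∀ i ≤ k, (A ^ i).IsPartialIsometry) ∧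
      ¬ (A ^ (k + 1)).IsPartialIsometry := by
  set S := {j : ℕ | ∀ i ≤ j, (A ^ i).IsPartialIsometry}
  have h0 : 0 ∈ S := by
    intro i hi
    rw [nonpos_iff_eq_zero.1 hi, pow_zero, Matrix.IsPartialIsometry, toLpLin_one]
    exact fun _ _ => rfl
  have hbdd : BddAbove S := by
    by_contra hS
    exact hfin (ENat.sSup_eq_top_of_infinite
      ((Set.infinite_of_not_bddAbove hS).image Nat.cast_injective.injOn))
  have hkS : sSup S ∈ S := Nat.sSup_mem ⟨0, h0⟩ hbdd
  refine ⟨sSup S, by rw [pIndex, sSup_image, ENat.natCast_sSup hbdd], hkS, fun hsucc => ?_⟩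
  refine notMem_of_csSup_lt (Nat.lt_succ_self _) hbdd (fun i hi => ?_)
  rcases hi.lt_or_eq with hi | rfl
  · exact hkS i (by omega)
  · exact hsucc

theorem ker_pow_ascent :
    ker (toEuclideanLin A ^ A.ascent) = ker (toEuclideanLin A ^ (A.ascent + 1)) := by
  have hne :
      {k : ℕ | ker (toEuclideanLin (A ^ k)) = ker (toEuclideanLin (A ^ (k + 1)))}.Nonempty := by
    refine ⟨finrank ℂ (EuclideanSpace ℂ ι), ?_⟩
    rw [Set.mem_ofPred_eq, toLpLin_pow, toLpLin_pow]
    exact (Module.End.ker_pow_eq_ker_pow_finrank_of_le (Nat.le_succ _)).symm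
  rw [← toLpLin_pow, ← toLpLin_pow]
  exact Nat.sInf_mem hne

theorem ker_pow_ne_of_lt_ascent {j : ℕ} (hj : j < A.ascent) :
    ker (toEuclideanLin A ^ j) ≠ ker (toEuclideanLin A ^ (j + 1)) := by
  rw [← toLpLin_pow, ← toLpLin_pow]
  exact Nat.notMem_of_lt_sInf hj

end Matrix

/-- **Lemma 3.3 (a).** If `A` is an `n`-by-`n` complex matrix with `p(A)` finite and
`p(A) + a(A) > n`, then `p(A) = a(A)`. -/
theorem pIndex_eq_ascent_of_add_gt (n : ℕ) (A : Matrix (Fin n) (Fin n) ℂ)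
    (hfin : A.pIndex ≠ ⊤) (h : (n : ℕ∞) < A.pIndex + (A.ascent : ℕ∞)) :
    A.pIndex = (A.ascent : ℕ∞) := by
  obtain ⟨k, hk, hPI, hnot⟩ := A.exists_pIndex_eq hfin
  simp only [A.isPartialIsometry_pow_iff] at hPI hnot
  have hle : k ≤ A.ascent :=
    Module.End.le_of_not_isPartialIsometry_pow_succ hPI hnot A.ker_pow_ascent
  have hge : A.ascent ≤ k := by
    by_contra! hlt
    have hcount := Module.End.add_le_finrank_ker_pow hle (fun j => A.ker_pow_ne_of_lt_ascent)
      (fun j => Module.End.two_le_finrank_ker_inf_range_pow hPI hnot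
        (A.ker_pow_ne_of_lt_ascent hlt))
    have hdim := (ker (toEuclideanLin A ^ A.ascent)).finrank_le
    rw [finrank_euclideanSpace_fin] at hdim
    rw [hk] at h
    norm_cast at h
    omega
  rw [hk, le_antisymm hle hge]

end
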